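/- Suppose f : ℝ^d → ℝ is L_f-smooth, h : ℝ^d → ℝ is L_h-smooth, g : ℝ^d → ℝ ∪ {+∞} is proper, lower semicontinuous and ρ-weakly convex. Let γ ∈ (0, min{1/ρ, 1/L_f}), λ > 0, α ∈ (0,1). Fix x ∈ ℝ^d, let y be the unique minimizer over y of g(y) + (1/(2γ))‖y − (x − γ∇(f+h)(x))‖², let t be the unique minimizer over u of f(u) + (1/(2γ))‖u − ((1 − λ)x + γ∇f(x) + λy)‖², and set x⁺ := (1 − α)x + αt. Then ⟨∇f(x⁺) − ∇f(x) − (1/γ)(x⁺ − x), x − y⟩ ≥ [ 1/(λαγ) − 2L_f/(λα) − (L_f²γ/λ)((1 − α)/α) ] ‖x − x⁺‖² − (γ/λ) ‖∇f(x) − ∇f(x⁺)‖². -/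
import Mathlib

open scoped RealInnerProductSpace

lemma prox_grad_eq {E : Type*} [NormedAddCommGroup E] [InnerProductSpace ℝ E] [CompleteSpace E]
    (f : E → ℝ) (hfd : Differentiable ℝ f) (γ : ℝ) (hγ : 0 < γ) (c w : E)
    (hw : ∀ u, f w + 1 / (2 * γ) * ‖w - c‖ ^ 2 ≤ f u + 1 / (2 * γ) * ‖u - c‖ ^ 2) :
    γ • gradient f w = c - w := by
  have hsub : HasFDerivAt (fun u : E => u - c) (ContinuousLinearMap.id ℝ E) w :=
    (hasFDerivAt_id w).sub_const c
  have hin : HasFDerivAt (fun u : E => (⟪u - c, u - c⟫ : ℝ))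
      ((fderivInnerCLM ℝ (w - c, w - c)).comp
        ((ContinuousLinearMap.id ℝ E).prod (ContinuousLinearMap.id ℝ E))) w :=
    hsub.inner ℝ hsub
  have hns : HasFDerivAt (fun u : E => ‖u - c‖ ^ 2)
      ((fderivInnerCLM ℝ (w - c, w - c)).comp
        ((ContinuousLinearMap.id ℝ E).prod (ContinuousLinearMap.id ℝ E))) w := by
    have : (fun u : E => ‖u - c‖ ^ 2) = fun u : E => (⟪u - c, u - c⟫ : ℝ) :=
      funext fun u => (real_inner_self_eq_norm_sq _).symm
    rw [this]; exact hin
  have hgrad : HasFDerivAt f ((InnerProductSpace.toDual ℝ E) (gradient f w)) w :=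
    (hfd w).hasGradientAt.hasFDerivAt
  have hφ : HasFDerivAt (fun u => f u + 1 / (2 * γ) * ‖u - c‖ ^ 2)
      ((InnerProductSpace.toDual ℝ E) (gradient f w) +
        (1 / (2 * γ)) • ((fderivInnerCLM ℝ (w - c, w - c)).comp
          ((ContinuousLinearMap.id ℝ E).prod (ContinuousLinearMap.id ℝ E)))) w :=
    hgrad.add (hns.const_mul (1 / (2 * γ)))
  have hmin : IsLocalMin (fun u => f u + 1 / (2 * γ) * ‖u - c‖ ^ 2) w :=
    Filter.Eventually.of_forall hw
  have hz := hmin.fderiv_eq_zero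
  rw [hφ.fderiv] at hz
  have hv : ∀ v : E, ⟪gradient f w, v⟫ + 1 / (2 * γ) * (⟪w - c, v⟫ + ⟪v, w - c⟫) = 0 := by
    intro v
    have := congrFun (congrArg (fun (L : E →L[ℝ] ℝ) => (L : E → ℝ)) hz) v
    simpa [fderivInnerCLM_apply, InnerProductSpace.toDual_apply_apply] using this
  have h2 : ∀ v : E, ⟪γ • gradient f w - (c - w), v⟫ = 0 := by
    intro v
    have h3 := hv v
    have hγ' : γ ≠ 0 := ne_of_gt hγ
    simp only [inner_sub_left, inner_sub_right, inner_smul_left, starRingEnd_apply,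
      star_trivial, real_inner_comm v w, real_inner_comm v c] at h3 ⊢
    field_simp at h3 ⊢
    linarith
  have h4 := h2 (γ • gradient f w - (c - w))
  rw [inner_self_eq_zero] at h4
  exact sub_eq_zero.mp h4


lemma q1_aux {E : Type*} [NormedAddCommGroup E] [InnerProductSpace ℝ E]
    (a b s xy : E) (Lf γ lam α : ℝ) (hLf : 0 ≤ Lf) (hγ0 : 0 < γ)
    (hlam : 0 < lam) (hα0 : 0 < α) (hα1 : α < 1)
    (hA : ‖a‖ ≤ Lf * ‖s‖) (hB : α * ‖b‖ ≤ Lf * ((1 - α) * ‖s‖))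
    (hxy : (lam * α) • xy = s + (α * γ) • b - (α * γ) • a) :
    ⟪a + γ⁻¹ • s, xy⟫ ≥
      (1 / (lam * α * γ) - 2 * Lf / (lam * α) - (Lf ^ 2 * γ / lam) * ((1 - α) / α)) * ‖s‖ ^ 2
      - (γ / lam) * ‖a‖ ^ 2 := by
  have hlaγ : 0 < lam * α * γ := by positivity
  have hP : (lam * α) * ⟪a + γ⁻¹ • s, xy⟫ =
      ⟪a, s⟫ + (α * γ) * ⟪a, b⟫ - (α * γ) * ‖a‖ ^ 2 + γ⁻¹ * ‖s‖ ^ 2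
        + (γ⁻¹ * (α * γ)) * ⟪s, b⟫ - (γ⁻¹ * (α * γ)) * ⟪a, s⟫ := by
    rw [← real_inner_smul_right, hxy]
    simp only [inner_add_left, inner_add_right, inner_sub_right, inner_smul_left,
      inner_smul_right, real_inner_self_eq_norm_sq, real_inner_comm s a,
      starRingEnd_apply, star_trivial]
    ring
  have h1 : -(‖a‖ * ‖s‖) ≤ ⟪a, s⟫ := (abs_le.mp (abs_real_inner_le_norm a s)).1
  have h2 : -(‖a‖ * ‖b‖) ≤ ⟪a, b⟫ := (abs_le.mp (abs_real_inner_le_norm a b)).1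
  have h3 : -(‖s‖ * ‖b‖) ≤ ⟪s, b⟫ := (abs_le.mp (abs_real_inner_le_norm s b)).1
  have c1 : γ * (1 - α) * ⟪a, s⟫ ≥ -(γ * (1 - α) * (Lf * ‖s‖ * ‖s‖)) := by
    nlinarith [mul_le_mul_of_nonneg_left h1 (mul_nonneg hγ0.le (by linarith : (0:ℝ) ≤ 1 - α)),
      mul_le_mul_of_nonneg_left (mul_le_mul_of_nonneg_right hA (norm_nonneg s))
        (mul_nonneg hγ0.le (by linarith : (0:ℝ) ≤ 1 - α))]
  have hab : ‖a‖ * (α * ‖b‖) ≤ (Lf * ‖s‖) * (Lf * ((1 - α) * ‖s‖)) :=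
    mul_le_mul hA hB (by positivity) (by positivity)
  have c2 : α * γ ^ 2 * ⟪a, b⟫ ≥ -(γ ^ 2 * ((Lf * ‖s‖) * (Lf * ((1 - α) * ‖s‖)))) := by
    nlinarith [mul_le_mul_of_nonneg_left h2 (by positivity : (0:ℝ) ≤ α * γ ^ 2),
      mul_le_mul_of_nonneg_left hab (by positivity : (0:ℝ) ≤ γ ^ 2)]
  have c3 : α * γ * ⟪s, b⟫ ≥ -(γ * (‖s‖ * (Lf * ((1 - α) * ‖s‖)))) := by
    nlinarith [mul_le_mul_of_nonneg_left h3 (by positivity : (0:ℝ) ≤ α * γ),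
      mul_le_mul_of_nonneg_left (mul_le_mul_of_nonneg_left hB (norm_nonneg s))
        (by positivity : (0:ℝ) ≤ γ)]
  have key : 0 ≤ γ * (1 - α) * ⟪a, s⟫ + α * γ ^ 2 * ⟪a, b⟫ + α * γ * ⟪s, b⟫
      + (2 * Lf * γ + Lf ^ 2 * γ ^ 2 * (1 - α)) * ‖s‖ ^ 2 := by
    nlinarith [c1, c2, c3,
      mul_nonneg (mul_nonneg (mul_nonneg hγ0.le hLf) hα0.le) (sq_nonneg ‖s‖)]
  rw [ge_iff_le, ← sub_nonneg]
  have e1 : (lam * α * γ) * (⟪a + γ⁻¹ • s, xy⟫ -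
      ((1 / (lam * α * γ) - 2 * Lf / (lam * α) - (Lf ^ 2 * γ / lam) * ((1 - α) / α)) * ‖s‖ ^ 2
        - (γ / lam) * ‖a‖ ^ 2)) =
      γ * (1 - α) * ⟪a, s⟫ + α * γ ^ 2 * ⟪a, b⟫ + α * γ * ⟪s, b⟫
        + (2 * Lf * γ + Lf ^ 2 * γ ^ 2 * (1 - α)) * ‖s‖ ^ 2 := by
    rw [mul_sub]
    have e0 : (lam * α * γ) * ⟪a + γ⁻¹ • s, xy⟫ = γ * ((lam * α) * ⟪a + γ⁻¹ • s, xy⟫) := by ring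
    rw [e0, hP]
    field_simp
    ring
  have hQ : (lam * α * γ) * 0 ≤ (lam * α * γ) * (⟪a + γ⁻¹ • s, xy⟫ -
      ((1 / (lam * α * γ) - 2 * Lf / (lam * α) - (Lf ^ 2 * γ / lam) * ((1 - α) / α)) * ‖s‖ ^ 2
        - (γ / lam) * ‖a‖ ^ 2)) := by
    rw [mul_zero, e1]; exact key
  exact le_of_mul_le_mul_left (by simpa using hQ) hlaγ

/-- `g` is `ρ`-weakly convex: `g + (ρ/2)‖·‖²` is convex (extended-real-valued version). -/
def WeaklyConvexE {E : Type*} [NormedAddCommGroup E] [InnerProductSpace ℝ E]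
    (ρ : ℝ) (g : E → EReal) : Prop :=
  ∀ x y : E, ∀ t : ℝ, 0 ≤ t → t ≤ 1 →
    g (t • x + (1 - t) • y) + (((ρ / 2) * ‖t • x + (1 - t) • y‖ ^ 2 : ℝ) : EReal) ≤
      (t : EReal) * (g x + (((ρ / 2) * ‖x‖ ^ 2 : ℝ) : EReal)) +
        ((1 - t : ℝ) : EReal) * (g y + (((ρ / 2) * ‖y‖ ^ 2 : ℝ) : EReal))

theorem q1_estimate
    {E : Type*} [NormedAddCommGroup E] [InnerProductSpace ℝ E] [FiniteDimensional ℝ E]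
    (f h : E → ℝ) (g : E → EReal) (Lf Lh ρ : ℝ)
    (hLf : 0 ≤ Lf) (hLh : 0 ≤ Lh) (hρ : 0 ≤ ρ)
    (hfd : Differentiable ℝ f)
    (hflip : ∀ x y : E, ‖gradient f x - gradient f y‖ ≤ Lf * ‖x - y‖)
    (hhd : Differentiable ℝ h)
    (hhlip : ∀ x y : E, ‖gradient h x - gradient h y‖ ≤ Lh * ‖x - y‖)
    (hgtop : ∃ x, g x ≠ ⊤) (hgbot : ∀ x, g x ≠ ⊥)
    (hglsc : LowerSemicontinuous g)
    (hwc : WeaklyConvexE ρ g)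
    (γ lam α : ℝ) (hγ0 : 0 < γ) (hγρ : γ * ρ < 1) (hγf : γ * Lf < 1)
    (hlam : 0 < lam) (hα0 : 0 < α) (hα1 : α < 1)
    (x y t : E)
    (hy : ∀ w : E,
      g y + ((1 / (2 * γ) *
        ‖y - (x - γ • gradient (fun v => f v + h v) x)‖ ^ 2 : ℝ) : EReal) ≤
      g w + ((1 / (2 * γ) *
        ‖w - (x - γ • gradient (fun v => f v + h v) x)‖ ^ 2 : ℝ) : EReal))
    (ht : ∀ u : E,
      f t + 1 / (2 * γ) *
        ‖t - ((1 - lam) • x + γ • gradient f x + lam • y)‖ ^ 2 ≤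
      f u + 1 / (2 * γ) *
        ‖u - ((1 - lam) • x + γ • gradient f x + lam • y)‖ ^ 2)
    (xp : E) (hxp : xp = (1 - α) • x + α • t) :
    ⟪gradient f xp - gradient f x - (1 / γ) • (xp - x), x - y⟫ ≥
      (1 / (lam * α * γ) - 2 * Lf / (lam * α)
        - (Lf ^ 2 * γ / lam) * ((1 - α) / α)) * ‖x - xp‖ ^ 2
      - (γ / lam) * ‖gradient f x - gradient f xp‖ ^ 2 := by
  have hC : γ • gradient f t = ((1 - lam) • x + γ • gradient f x + lam • y) - t :=
    prox_grad_eq f hfd γ hγ0 _ t ht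
  have hA : ‖gradient f xp - gradient f x‖ ≤ Lf * ‖x - xp‖ := by
    have h := hflip xp x; rwa [norm_sub_rev xp x] at h
  have hBv : α • (xp - t) = (1 - α) • (x - xp) := by rw [hxp]; module
  have hB : α * ‖gradient f xp - gradient f t‖ ≤ Lf * ((1 - α) * ‖x - xp‖) := by
    have h1 := hflip xp t
    have h2 : α * ‖xp - t‖ = (1 - α) * ‖x - xp‖ := by
      have h3 := congrArg norm hBv
      rwa [norm_smul, norm_smul, Real.norm_eq_abs, Real.norm_eq_abs, abs_of_pos hα0,
        abs_of_nonneg (by linarith : (0:ℝ) ≤ 1 - α)] at h3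
    calc α * ‖gradient f xp - gradient f t‖ ≤ α * (Lf * ‖xp - t‖) :=
          mul_le_mul_of_nonneg_left h1 hα0.le
      _ = Lf * (α * ‖xp - t‖) := by ring
      _ = Lf * ((1 - α) * ‖x - xp‖) := by rw [h2]
  have hxy : (lam * α) • (x - y) = (x - xp) + (α * γ) • (gradient f xp - gradient f t)
      - (α * γ) • (gradient f xp - gradient f x) := by
    rw [hxp]
    linear_combination (norm := module) α • hC
  have hmain := q1_aux (gradient f xp - gradient f x) (gradient f xp - gradient f t)
    (x - xp) (x - y) Lf γ lam α hLf hγ0 hlam hα0 hα1 hA hB hxy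
  have hvec : gradient f xp - gradient f x - (1 / γ) • (xp - x)
      = (gradient f xp - gradient f x) + γ⁻¹ • (x - xp) := by
    rw [one_div]; module
  rw [hvec, norm_sub_rev (gradient f x) (gradient f xp)]
  exact hmain
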